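/- arXiv:1902.04806 — 3 statements merged into one kernel-verified Lean document; each statement's English description precedes it below -/
import Mathlib

section
/- Let N ≥ 2, μ ≥ μ₀, and let Ω ⊂ ℝ^N be a bounded domain with C² boundary containing the origin. Let h : Ω × ℝ → ℝ be continuous, nondecreasing in its second argument, with h(x, 0) = 0 for all x ∈ Ω. If u ∈ C²(Ω∖{0}) ∩ C((closure of Ω)∖{0}) satisfies −Δu + μ|x|^{−2}u + h(x, u) = 0 pointwise in Ω∖{0}, u = 0 on ∂Ω, and lim_{x→0} u(x)/Φ_μ(x) = 0, then u ≡ 0 on Ω∖{0}. -/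
/-!
Comparison with a barrier. Let `W > 0` be a strict supersolution of `ℒ_μ` in the punctured
domain that dominates `Φ_μ` near the origin: for `μ > μ₀` take `W = |x|^τ₋ + |x|^β`, and for
`μ = μ₀` take `W = |x|^β (log R + R² - log |x| - |x|²)`, where `β = -(N-2)/2` and `Ω ⊆ B_R`.
If `u` were positive somewhere, then, since `u / W ≤ 0` on `∂Ω` and `u / W → 0` at the origin,
`u / W` would attain a positive maximum `c` at a point `x₀ ∈ Ω \ {0}`. There `u - c W` has a
local maximum, so `ℒ_μ u (x₀) ≥ c ℒ_μ W (x₀) > 0`, while `ℒ_μ u = -h(x, u) ≤ 0` wherever `u > 0`.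
The same argument applied to `-u` gives `u = 0`.
-/

open MeasureTheory Metric Real Set Filter
open scoped ENNReal NNReal Topology

noncomputable section

abbrev EucN (N : ℕ) : Type := EuclideanSpace ℝ (Fin N)

/-- The Laplacian of `f` at `x`, as the trace of the second derivative. -/
def lapl {N : ℕ} (f : EucN N → ℝ) (x : EucN N) : ℝ :=
  ∑ i : Fin N, iteratedFDeriv ℝ 2 f x ![EuclideanSpace.single i 1, EuclideanSpace.single i 1]

/-- The critical Hardy constant `μ₀ = -(N-2)²/4`. -/
def mu0 (N : ℕ) : ℝ := -(((N : ℝ) - 2) ^ 2) / 4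

/-- `τ₊(μ) = -(N-2)/2 + √((N-2)²/4 + μ)`. -/
def tauP (N : ℕ) (μ : ℝ) : ℝ := -((N : ℝ) - 2) / 2 + Real.sqrt (((N : ℝ) - 2) ^ 2 / 4 + μ)

/-- `τ₋(μ) = -(N-2)/2 - √((N-2)²/4 + μ)`. -/
def tauM (N : ℕ) (μ : ℝ) : ℝ := -((N : ℝ) - 2) / 2 - Real.sqrt (((N : ℝ) - 2) ^ 2 / 4 + μ)

/-- The critical exponent `p*_μ = 1 - 2/τ₋`. -/
def pstar (N : ℕ) (μ : ℝ) : ℝ := 1 - 2 / tauM N μ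

/-- `ℒ*_μ ξ = -Δξ - 2 τ₊ |x|⁻² ⟨x, ∇ξ⟩`. -/
def Lstar {N : ℕ} (μ : ℝ) (ξ : EucN N → ℝ) (x : EucN N) : ℝ :=
  - lapl ξ x - 2 * tauP N μ * ‖x‖ ^ (-2 : ℝ) * fderiv ℝ ξ x x

/-- The space of test functions `𝕏_μ(Ω)`: continuous on `closure Ω`, vanishing on `∂Ω`,
`C¹` away from the origin, with `|x| ℒ*_μ ξ` essentially bounded on `Ω`. -/
def Xtest {N : ℕ} (μ : ℝ) (Ω : Set (EucN N)) : Set (EucN N → ℝ) :=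
  {ξ | ContinuousOn ξ (closure Ω) ∧ (∀ x ∈ frontier Ω, ξ x = 0) ∧
    ContDiffOn ℝ 1 ξ (closure Ω \ {0}) ∧
    ∃ M : ℝ, ∀ᵐ x ∂(volume.restrict Ω), ‖x‖ * |Lstar μ ξ x| ≤ M}

/-- The singular fundamental profile `Φ_μ`. -/
def PhiMu (N : ℕ) (μ : ℝ) (x : EucN N) : ℝ :=
  if μ = mu0 N then ‖x‖ ^ (-((N : ℝ) - 2) / 2) * Real.log (1 / ‖x‖)
  else ‖x‖ ^ tauM N μ

open InnerProductSpace Laplacian Module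

lemma Real.rpow_eq_sq_rpow_half {a : ℝ} (ha : 0 ≤ a) (p : ℝ) : a ^ p = (a ^ 2) ^ (p / 2) := by
  rw [← Real.rpow_natCast, ← Real.rpow_mul ha]
  push_cast
  ring_nf

lemma Real.rpow_neg_two_mul_rpow {r : ℝ} (hr : 0 < r) (σ : ℝ) :
    r ^ (-2 : ℝ) * r ^ σ = r ^ (σ - 2) := by
  rw [← Real.rpow_add hr, neg_add_eq_sub]

lemma IsLocalMax.nonpos_of_hasDerivAt_hasDerivAt {g g' : ℝ → ℝ} {a A : ℝ}
    (hmax : IsLocalMax g a) (hg : ∀ᶠ t in 𝓝 a, HasDerivAt g (g' t) t)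
    (hg' : HasDerivAt g' A a) : A ≤ 0 := by
  by_contra! hA
  -- `g'` vanishes at `a` with positive slope, so `g' > 0` just right of `a`, where the mean
  -- value theorem then makes `g` exceed `g a`.
  have hg'a : g' a = 0 := hmax.hasDerivAt_eq_zero hg.self_of_nhds
  have hpos : ∀ᶠ t in 𝓝[>] a, 0 < g' t := by
    filter_upwards [nhdsGT_le_nhdsNE a ((hasDerivAt_iff_tendsto_slope.mp hg').eventually
      (eventually_gt_nhds hA)), self_mem_nhdsWithin] with t hslope ht
    exact pos_of_slope_pos ht hslope hg'a
  obtain ⟨b, hab, hb⟩ := (nhdsGT_basis a).eventually_iff.mp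
    (hpos.and ((hg.filter_mono nhdsWithin_le_nhds).and (hmax.filter_mono nhdsWithin_le_nhds)))
  have hmid : (a + b) / 2 ∈ Ioo a b := ⟨by linarith, by linarith⟩
  have hderiv : ∀ t ∈ Icc a ((a + b) / 2), HasDerivAt g (g' t) t := by
    rintro t ⟨hat, htb⟩
    rcases hat.eq_or_lt with rfl | hat
    · exact hg.self_of_nhds
    · exact (hb ⟨hat, htb.trans_lt hmid.2⟩).2.1
  obtain ⟨ξ, hξ, hslope⟩ := exists_hasDerivAt_eq_slope g g' hmid.1
    (fun t ht => (hderiv t ht).continuousAt.continuousWithinAt)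
    (fun t ht => hderiv t (Ioo_subset_Icc_self ht))
  have hgξ := (hb ⟨hξ.1, hξ.2.trans hmid.2⟩).1
  rw [hslope, div_pos_iff_of_pos_right (by linarith [hmid.1])] at hgξ
  linarith [(hb hmid).2.2]

section SecondDerivativeTest

variable {E : Type*} [NormedAddCommGroup E] [NormedSpace ℝ E]

lemma IsLocalMax.fderiv_fderiv_apply_self_nonpos {f : E → ℝ} {x : E} (hmax : IsLocalMax f x)
    (hf : ContDiffAt ℝ 2 f x) (e : E) : fderiv ℝ (fderiv ℝ f) x e e ≤ 0 := by
  have hline : ∀ t : ℝ, HasDerivAt (fun s : ℝ => x + s • e) e t := fun t => by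
    simpa using ((hasDerivAt_id t).smul_const e).const_add x
  have hcont : Tendsto (fun s : ℝ => x + s • e) (𝓝 0) (𝓝 x) := by
    have : Continuous (fun s : ℝ => x + s • e) := by fun_prop
    simpa using this.tendsto 0
  have hdiff : ∀ᶠ y in 𝓝 x, DifferentiableAt ℝ f y :=
    (hf.eventually (by simp)).mono fun y hy => hy.differentiableAt (by norm_num)
  have hdiff2 : DifferentiableAt ℝ (fderiv ℝ f) x :=
    (hf.fderiv_right (m := 1) (by norm_num)).differentiableAt (by norm_num)
  refine IsLocalMax.nonpos_of_hasDerivAt_hasDerivAt (g := fun s => f (x + s • e))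
    (g' := fun s => fderiv ℝ f (x + s • e) e) (a := 0) ?_ ?_ ?_
  · simpa [IsLocalMax, IsMaxFilter] using hcont.eventually hmax
  · filter_upwards [hcont.eventually hdiff] with t ht
    exact ht.hasFDerivAt.comp_hasDerivAt t (hline t)
  · have h2 : HasFDerivAt (fderiv ℝ f) (fderiv ℝ (fderiv ℝ f) x) (x + (0 : ℝ) • e) := by
      simpa using hdiff2.hasFDerivAt
    have h3 : HasDerivAt (fun s : ℝ => fderiv ℝ f (x + s • e)) (fderiv ℝ (fderiv ℝ f) x e) 0 :=
      h2.comp_hasDerivAt (0 : ℝ) (hline 0)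
    simpa using h3.clm_apply (hasDerivAt_const (0 : ℝ) e)

end SecondDerivativeTest

lemma lapl_eq_laplacian {N : ℕ} (f : EucN N → ℝ) : lapl f = Δ f := by
  rw [laplacian_eq_iteratedFDeriv_orthonormalBasis f (EuclideanSpace.basisFun (Fin N) ℝ)]
  ext x
  simp [lapl, EuclideanSpace.basisFun_apply]

section Laplacian

variable {E : Type*} [NormedAddCommGroup E] [InnerProductSpace ℝ E]

lemma contDiffAt_norm_rpow {k : WithTop ℕ∞} {x : E} (hx : x ≠ 0) (σ : ℝ) :
    ContDiffAt ℝ k (fun y : E => ‖y‖ ^ σ) x :=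
  (contDiffAt_norm ℝ hx).rpow_const_of_ne (norm_ne_zero_iff.mpr hx)

lemma contDiffAt_norm_rpow_mul_log {k : WithTop ℕ∞} {x : E} (hx : x ≠ 0) (σ : ℝ) :
    ContDiffAt ℝ k (fun y : E => ‖y‖ ^ σ * Real.log ‖y‖) x :=
  (contDiffAt_norm_rpow hx σ).mul ((contDiffAt_norm ℝ hx).log (norm_ne_zero_iff.mpr hx))

variable [FiniteDimensional ℝ E]

lemma IsLocalMax.laplacian_nonpos {f : E → ℝ} {x : E} (hmax : IsLocalMax f x)
    (hf : ContDiffAt ℝ 2 f x) : Δ f x ≤ 0 := by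
  rw [laplacian_eq_iteratedFDeriv_stdOrthonormalBasis]
  refine Finset.sum_nonpos fun i _ => ?_
  rw [iteratedFDeriv_two_apply]
  exact hmax.fderiv_fderiv_apply_self_nonpos hf _

lemma laplacian_comp_norm_sq {F F' F'' : ℝ → ℝ} {x : E}
    (hF : ∀ᶠ q in 𝓝 (‖x‖ ^ 2), HasDerivAt F (F' q) q)
    (hF' : HasDerivAt F' (F'' (‖x‖ ^ 2)) (‖x‖ ^ 2)) :
    Δ (fun y : E => F (‖y‖ ^ 2)) x
      = 4 * ‖x‖ ^ 2 * F'' (‖x‖ ^ 2) + 2 * finrank ℝ E * F' (‖x‖ ^ 2) := by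
  let A : E →L[ℝ] E →L[ℝ] ℝ := innerSL ℝ
  have hA : ∀ y z, A y z = inner ℝ y z := fun _ _ => rfl
  have hsq : ∀ y : E, HasFDerivAt (fun z : E => ‖z‖ ^ 2) (2 • A y) y :=
    fun y => (hasStrictFDerivAt_norm_sq y).hasFDerivAt
  have hD : fderiv ℝ (fun y => F (‖y‖ ^ 2)) =ᶠ[𝓝 x] fun y => (2 * F' (‖y‖ ^ 2)) • A y := by
    filter_upwards [((continuous_norm.pow 2).tendsto x).eventually hF] with y hy
    refine ((hy.comp_hasFDerivAt y (hsq y)).congr_fderiv ?_).fderiv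
    ext v
    simp [hA]
    ring
  have hc : HasFDerivAt (fun y : E => 2 * F' (‖y‖ ^ 2)) ((4 * F'' (‖x‖ ^ 2)) • A x) x := by
    refine ((hF'.comp_hasFDerivAt x (hsq x)).const_mul 2).congr_fderiv ?_
    ext v
    simp [hA]
    ring
  have hD2 : fderiv ℝ (fderiv ℝ fun y => F (‖y‖ ^ 2)) x
      = (2 * F' (‖x‖ ^ 2)) • A + ((4 * F'' (‖x‖ ^ 2)) • A x).smulRight (A x) := by
    rw [hD.fderiv_eq]
    exact (hc.smul A.hasFDerivAt).fderiv
  have hsum := (stdOrthonormalBasis ℝ E).sum_sq_inner_left x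
  rw [laplacian_eq_iteratedFDeriv_stdOrthonormalBasis]
  simp only [iteratedFDeriv_two_apply, hD2]
  simp [hA, Finset.sum_add_distrib]
  simp only [mul_assoc, ← sq, ← Finset.mul_sum, hsum]
  ring

lemma laplacian_norm_rpow {x : E} (hx : x ≠ 0) (σ : ℝ) :
    Δ (fun y : E => ‖y‖ ^ σ) x = σ * (σ + finrank ℝ E - 2) * ‖x‖ ^ (σ - 2) := by
  have hq : 0 < ‖x‖ ^ 2 := by positivity
  simp_rw [Real.rpow_eq_sq_rpow_half (norm_nonneg _)]
  refine (laplacian_comp_norm_sq (F := fun q => q ^ (σ / 2))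
    (F' := fun q => σ / 2 * q ^ (σ / 2 - 1))
    (F'' := fun q => σ / 2 * ((σ / 2 - 1) * q ^ (σ / 2 - 1 - 1))) ?_ ?_).trans ?_
  · filter_upwards [lt_mem_nhds hq] with q hq
    exact Real.hasDerivAt_rpow_const (Or.inl hq.ne')
  · exact (Real.hasDerivAt_rpow_const (Or.inl hq.ne')).const_mul _
  · rw [show σ / 2 - 1 - 1 = (σ - 2) / 2 - 1 by ring, Real.rpow_sub_one hq.ne',
      show σ / 2 - 1 = (σ - 2) / 2 by ring]
    field_simp
    ring

lemma laplacian_norm_rpow_mul_log {x : E} (hx : x ≠ 0) (σ : ℝ) :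
    Δ (fun y : E => ‖y‖ ^ σ * Real.log ‖y‖) x
      = (σ * (σ + finrank ℝ E - 2) * Real.log ‖x‖ + 2 * σ + finrank ℝ E - 2) * ‖x‖ ^ (σ - 2) := by
  have hq : 0 < ‖x‖ ^ 2 := by positivity
  have hlog : ∀ y : E, Real.log ‖y‖ = Real.log (‖y‖ ^ 2) / 2 := fun y => by
    rw [Real.log_pow]; push_cast; ring
  simp_rw [Real.rpow_eq_sq_rpow_half (norm_nonneg _), hlog]
  set a := σ / 2
  have hF : ∀ q : ℝ, 0 < q → HasDerivAt (fun q => q ^ a * (Real.log q / 2))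
      (q ^ (a - 1) * (a * Real.log q + 1) / 2) q := fun q hq => by
    refine ((Real.hasDerivAt_rpow_const (p := a) (Or.inl hq.ne')).mul
      ((Real.hasDerivAt_log hq.ne').div_const 2)).congr_deriv ?_
    rw [Real.rpow_sub_one hq.ne']
    field_simp
  have hF' : HasDerivAt (fun q => q ^ (a - 1) * (a * Real.log q + 1) / 2)
      ((‖x‖ ^ 2) ^ (a - 1 - 1) * ((a - 1) * (a * Real.log (‖x‖ ^ 2) + 1) + a) / 2) (‖x‖ ^ 2) := by
    refine (((Real.hasDerivAt_rpow_const (p := a - 1) (Or.inl hq.ne')).mul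
      (((Real.hasDerivAt_log hq.ne').const_mul a).add_const 1)).div_const 2).congr_deriv ?_
    rw [Real.rpow_sub_one hq.ne' (a - 1)]
    field_simp
  refine (laplacian_comp_norm_sq
    (F'' := fun q => q ^ (a - 1 - 1) * ((a - 1) * (a * Real.log q + 1) + a) / 2)
    ((eventually_gt_nhds hq).mono hF) hF').trans ?_
  rw [Real.rpow_sub_one hq.ne' (a - 1), Real.rpow_sub_one hq.ne' a,
    show (σ - 2) / 2 = a - 1 by ring, Real.rpow_sub_one hq.ne' a]
  field_simp
  ring

lemma laplacian_le_of_isLocalMax_sub_mul {u W : E → ℝ} {x : E} {c : ℝ}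
    (hu : ContDiffAt ℝ 2 u x) (hW : ContDiffAt ℝ 2 W x)
    (hmax : IsLocalMax (fun y => u y - c * W y) x) : Δ u x ≤ c * Δ W x := by
  have hcW : ContDiffAt ℝ 2 (c • W) x := hW.const_smul c
  have := (show IsLocalMax (u - c • W) x from hmax).laplacian_nonpos (hu.sub hcW)
  rw [hu.laplacian_sub hcW, laplacian_smul c hW] at this
  simpa [sub_nonpos] using this

lemma exists_isLocalMax_sub_mul_of_pos {Ω : Set E} {a : E} (hΩo : IsOpen Ω)
    (hΩb : Bornology.IsBounded Ω) {u W : E → ℝ} (huc : ContinuousOn u (closure Ω \ {a}))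
    (hWc : ContinuousOn W (closure Ω \ {a})) (hWpos : ∀ x ∈ closure Ω \ {a}, 0 < W x)
    (hbd : ∀ x ∈ frontier Ω, u x ≤ 0) (hlim : u =o[𝓝[≠] a] W) {x₁ : E} (hx₁ : x₁ ∈ Ω \ {a})
    (hu₁ : 0 < u x₁) :
    ∃ x₀ ∈ Ω \ {a}, ∃ c > 0, u x₀ = c * W x₀ ∧ IsLocalMax (fun y => u y - c * W y) x₀ := by
  have hx₁' : x₁ ∈ closure Ω \ {a} := ⟨subset_closure hx₁.1, hx₁.2⟩
  set c₁ := u x₁ / W x₁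
  have hc₁ : 0 < c₁ := div_pos hu₁ (hWpos x₁ hx₁')
  obtain ⟨δ, hδ, hnear⟩ := Metric.eventually_nhds_iff.mp
    (eventually_nhdsWithin_iff.mp (hlim.bound (half_pos hc₁)))
  have hfar : ∀ y ∈ closure Ω \ {a}, c₁ / 2 < u y / W y → δ ≤ dist y a := by
    intro y hy hratio
    by_contra! hya
    have hWy := hWpos y hy
    have := hnear hya hy.2
    rw [Real.norm_eq_abs, Real.norm_eq_abs, abs_of_pos hWy] at this
    rw [lt_div_iff₀ hWy] at hratio
    linarith [le_abs_self (u y)]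
  set K := closure Ω ∩ {y | δ / 2 ≤ dist y a}
  have hKc : IsCompact K := hΩb.isCompact_closure.inter_right
    (isClosed_le continuous_const (continuous_id.dist continuous_const))
  have hKsub : K ⊆ closure Ω \ {a} := by
    rintro y ⟨hyΩ, hya⟩
    refine ⟨hyΩ, ?_⟩
    rintro rfl
    have : δ / 2 ≤ dist y y := hya
    linarith [dist_self y]
  have hx₁K : x₁ ∈ K := by
    have := hfar x₁ hx₁' (half_lt_self hc₁)
    exact ⟨hx₁'.1, show δ / 2 ≤ dist x₁ a by linarith⟩
  obtain ⟨x₀, hx₀K, hx₀max⟩ := hKc.exists_isMaxOn ⟨x₁, hx₁K⟩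
    ((huc.div hWc fun y hy => (hWpos y hy).ne').mono hKsub)
  set c := u x₀ / W x₀
  have hWx₀ := hWpos x₀ (hKsub hx₀K)
  have hc : c₁ ≤ c := hx₀max hx₁K
  have hx₀eq : u x₀ = c * W x₀ := (div_mul_cancel₀ _ hWx₀.ne').symm
  have hx₀Ω : x₀ ∈ Ω := by
    by_contra hx₀Ω
    have := div_nonpos_of_nonpos_of_nonneg (hbd x₀ (hΩo.frontier_eq ▸ ⟨hx₀K.1, hx₀Ω⟩)) hWx₀.le
    linarith
  have hx₀far := hfar x₀ (hKsub hx₀K) (by linarith)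
  set O := Ω ∩ {y | δ / 2 < dist y a}
  have hO : O ∈ 𝓝 x₀ := ((hΩo.inter (isOpen_lt continuous_const
    (continuous_id.dist continuous_const))).mem_nhds ⟨hx₀Ω, show δ / 2 < dist x₀ a by linarith⟩)
  refine ⟨x₀, ⟨hx₀Ω, (hKsub hx₀K).2⟩, c, by linarith, hx₀eq, ?_⟩
  filter_upwards [hO] with y hy
  have hyK : y ∈ K := ⟨subset_closure hy.1, (show δ / 2 < dist y a from hy.2).le⟩
  have hratio : u y / W y ≤ c := hx₀max hyK
  rw [div_le_iff₀ (hWpos y (hKsub hyK))] at hratio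
  linarith

theorem nonpos_of_isLittleO_strictSupersolution {Ω : Set E} {a : E} (hΩo : IsOpen Ω)
    (hΩb : Bornology.IsBounded Ω) {V u W : E → ℝ} (hu : ContDiffOn ℝ 2 u (Ω \ {a}))
    (huc : ContinuousOn u (closure Ω \ {a})) (hbd : ∀ x ∈ frontier Ω, u x ≤ 0)
    (hsub : ∀ x ∈ Ω \ {a}, 0 < u x → -Δ u x + V x * u x ≤ 0)
    (hW : ContDiffOn ℝ 2 W (Ω \ {a})) (hWc : ContinuousOn W (closure Ω \ {a}))
    (hWpos : ∀ x ∈ closure Ω \ {a}, 0 < W x) (hWsuper : ∀ x ∈ Ω \ {a}, 0 < -Δ W x + V x * W x)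
    (hlim : u =o[𝓝[≠] a] W) :
    ∀ x ∈ Ω \ {a}, u x ≤ 0 := by
  intro x₁ hx₁
  by_contra! hu₁
  obtain ⟨x₀, hx₀, c, hc, hx₀eq, hmax⟩ :=
    exists_isLocalMax_sub_mul_of_pos hΩo hΩb huc hWc hWpos hbd hlim hx₁ hu₁
  have hO : Ω \ {a} ∈ 𝓝 x₀ := (hΩo.sdiff isClosed_singleton).mem_nhds hx₀
  have hΔ := laplacian_le_of_isLocalMax_sub_mul (hu.contDiffAt hO) (hW.contDiffAt hO) hmax
  have hpos : 0 < u x₀ := hx₀eq ▸ mul_pos hc (hWpos x₀ ⟨subset_closure hx₀.1, hx₀.2⟩)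
  have hsubx := hsub x₀ hx₀ hpos
  have hsuper := mul_pos hc (hWsuper x₀ hx₀)
  rw [hx₀eq] at hsubx
  linarith

theorem eq_zero_of_isLittleO_strictSupersolution {Ω : Set E} {a : E} (hΩo : IsOpen Ω)
    (hΩb : Bornology.IsBounded Ω) {V W u : E → ℝ} {h : E → ℝ → ℝ}
    (hmono : ∀ x ∈ Ω, Monotone (h x)) (hzero : ∀ x ∈ Ω, h x 0 = 0)
    (hu : ContDiffOn ℝ 2 u (Ω \ {a})) (huc : ContinuousOn u (closure Ω \ {a}))
    (heq : ∀ x ∈ Ω \ {a}, -Δ u x + V x * u x + h x (u x) = 0)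
    (hbd : ∀ x ∈ frontier Ω, u x = 0)
    (hW : ContDiffOn ℝ 2 W (Ω \ {a})) (hWc : ContinuousOn W (closure Ω \ {a}))
    (hWpos : ∀ x ∈ closure Ω \ {a}, 0 < W x) (hWsuper : ∀ x ∈ Ω \ {a}, 0 < -Δ W x + V x * W x)
    (hlim : u =o[𝓝[≠] a] W) :
    ∀ x ∈ Ω \ {a}, u x = 0 := by
  have hle : ∀ x ∈ Ω \ {a}, u x ≤ 0 :=
    nonpos_of_isLittleO_strictSupersolution hΩo hΩb hu huc (fun x hx => (hbd x hx).le)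
      (fun x hx hpos => by
        linarith [heq x hx, hzero x hx.1 ▸ hmono x hx.1 hpos.le])
      hW hWc hWpos hWsuper hlim
  have hge : ∀ x ∈ Ω \ {a}, -u x ≤ 0 :=
    nonpos_of_isLittleO_strictSupersolution (u := -u) hΩo hΩb hu.neg huc.neg
      (fun x hx => by simp [hbd x hx])
      (fun x hx hpos => by
        have := hzero x hx.1 ▸ hmono x hx.1 (neg_pos.mp hpos).le
        simp only [laplacian_neg, Pi.neg_apply] at hpos ⊢
        linarith [heq x hx])
      hW hWc hWpos hWsuper hlim.neg_left
  exact fun x hx => le_antisymm (hle x hx) (neg_nonpos.mp (hge x hx))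

def hardyOp (μ : ℝ) (f : E → ℝ) (x : E) : ℝ := -Δ f x + μ * ‖x‖ ^ (-2 : ℝ) * f x

section HardyOp

variable {μ : ℝ} {f g : E → ℝ} {x : E}

lemma hardyOp_add (hf : ContDiffAt ℝ 2 f x) (hg : ContDiffAt ℝ 2 g x) :
    hardyOp μ (f + g) x = hardyOp μ f x + hardyOp μ g x := by
  simp only [hardyOp, hf.laplacian_add hg, Pi.add_apply]
  ring

lemma hardyOp_sub (hf : ContDiffAt ℝ 2 f x) (hg : ContDiffAt ℝ 2 g x) :
    hardyOp μ (f - g) x = hardyOp μ f x - hardyOp μ g x := by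
  simp only [hardyOp, hf.laplacian_sub hg, Pi.sub_apply]
  ring

lemma hardyOp_const_smul (c : ℝ) (hf : ContDiffAt ℝ 2 f x) :
    hardyOp μ (c • f) x = c * hardyOp μ f x := by
  simp only [hardyOp, laplacian_smul c hf, Pi.smul_apply, smul_eq_mul]
  ring

end HardyOp

lemma hardyOp_norm_rpow (μ : ℝ) {x : E} (hx : x ≠ 0) (σ : ℝ) :
    hardyOp μ (fun y : E => ‖y‖ ^ σ) x = (μ - σ * (σ + finrank ℝ E - 2)) * ‖x‖ ^ (σ - 2) := by
  rw [hardyOp, laplacian_norm_rpow hx]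
  linear_combination μ * Real.rpow_neg_two_mul_rpow (norm_pos_iff.mpr hx) σ

lemma hardyOp_norm_rpow_mul_log (μ : ℝ) {x : E} (hx : x ≠ 0) (σ : ℝ) :
    hardyOp μ (fun y : E => ‖y‖ ^ σ * Real.log ‖y‖) x
      = ((μ - σ * (σ + finrank ℝ E - 2)) * Real.log ‖x‖ - (2 * σ + finrank ℝ E - 2))
        * ‖x‖ ^ (σ - 2) := by
  rw [hardyOp, laplacian_norm_rpow_mul_log hx]
  linear_combination μ * Real.log ‖x‖ * Real.rpow_neg_two_mul_rpow (norm_pos_iff.mpr hx) σ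

lemma hardyOp_norm_rpow_add_pos {μ τ β : ℝ} (hτ : τ * (τ + finrank ℝ E - 2) = μ)
    (hβ : β * (β + finrank ℝ E - 2) < μ) {x : E} (hx : x ≠ 0) :
    0 < hardyOp μ (fun y : E => ‖y‖ ^ τ + ‖y‖ ^ β) x := by
  rw [show (fun y : E => ‖y‖ ^ τ + ‖y‖ ^ β) = (fun y => ‖y‖ ^ τ) + (fun y => ‖y‖ ^ β) from rfl,
    hardyOp_add (contDiffAt_norm_rpow hx τ) (contDiffAt_norm_rpow hx β),
    hardyOp_norm_rpow μ hx, hardyOp_norm_rpow μ hx, hτ, sub_self, zero_mul, zero_add]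
  exact mul_pos (sub_pos.mpr hβ) (Real.rpow_pos_of_pos (norm_pos_iff.mpr hx) _)

lemma hardyOp_critical_supersolution {μ β : ℝ} (c : ℝ) (hβ : 2 * β + finrank ℝ E - 2 = 0)
    (hμ : μ = β * (β + finrank ℝ E - 2)) {x : E} (hx : x ≠ 0) :
    hardyOp μ (fun y : E => c * ‖y‖ ^ β - ‖y‖ ^ β * Real.log ‖y‖ - ‖y‖ ^ (β + 2)) x
      = 4 * ‖x‖ ^ β := by
  set P : E → ℝ := fun y => ‖y‖ ^ β
  set L : E → ℝ := fun y => ‖y‖ ^ β * Real.log ‖y‖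
  set Q : E → ℝ := fun y => ‖y‖ ^ (β + 2)
  have hP : ContDiffAt ℝ 2 P x := contDiffAt_norm_rpow hx β
  have hcP : ContDiffAt ℝ 2 (c • P) x := hP.const_smul c
  have hL : ContDiffAt ℝ 2 L x := contDiffAt_norm_rpow_mul_log hx β
  have hcPL : ContDiffAt ℝ 2 (c • P - L) x := hcP.sub hL
  rw [show (fun y : E => c * P y - L y - Q y) = c • P - L - Q from rfl,
    hardyOp_sub hcPL (contDiffAt_norm_rpow hx (β + 2)), hardyOp_sub hcP hL,
    hardyOp_const_smul c hP, hardyOp_norm_rpow μ hx, hardyOp_norm_rpow_mul_log μ hx,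
    hardyOp_norm_rpow μ hx, add_sub_cancel_right]
  linear_combination (c * ‖x‖ ^ (β - 2) - Real.log ‖x‖ * ‖x‖ ^ (β - 2) - ‖x‖ ^ β) * hμ
    + (‖x‖ ^ (β - 2) + 2 * ‖x‖ ^ β) * hβ

end Laplacian

lemma phiMu_pos {N : ℕ} {μ : ℝ} {x : EucN N} (hx₀ : x ≠ 0) (hx₁ : ‖x‖ < 1) :
    0 < PhiMu N μ x := by
  have hx := norm_pos_iff.mpr hx₀
  unfold PhiMu
  split_ifs
  · exact mul_pos (Real.rpow_pos_of_pos hx _) (Real.log_pos ((one_lt_div hx).mpr hx₁))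
  · exact Real.rpow_pos_of_pos hx _

lemma isLittleO_phiMu_of_tendsto {N : ℕ} {μ : ℝ} {u : EucN N → ℝ}
    (hlim : Tendsto (fun x => u x / PhiMu N μ x) (𝓝[≠] 0) (𝓝 0)) :
    u =o[𝓝[≠] 0] PhiMu N μ := by
  refine (Asymptotics.isLittleO_iff_tendsto' ?_).mpr hlim
  filter_upwards [self_mem_nhdsWithin, nhdsWithin_le_nhds (ball_mem_nhds 0 one_pos)]
    with x hx₀ hx₁ hΦ
  exact absurd hΦ (phiMu_pos hx₀ (mem_ball_zero_iff.mp hx₁)).ne'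

structure IsHardyBarrier (N : ℕ) (μ R : ℝ) (W : EucN N → ℝ) : Prop where
  contDiffAt : ∀ x ≠ 0, ContDiffAt ℝ 2 W x
  pos : ∀ x ∈ ball 0 R \ {0}, 0 < W x
  hardyOp_pos : ∀ x ≠ 0, 0 < hardyOp μ W x
  isBigO_phiMu : PhiMu N μ =O[𝓝[≠] 0] W

lemma isHardyBarrier_of_mu0_lt {N : ℕ} {μ : ℝ} (hμ : mu0 N < μ) (R : ℝ) :
    IsHardyBarrier N μ R fun y => ‖y‖ ^ tauM N μ + ‖y‖ ^ (-((N : ℝ) - 2) / 2) where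
  contDiffAt x hx := (contDiffAt_norm_rpow hx _).add (contDiffAt_norm_rpow hx _)
  pos x hx := by
    have := norm_pos_iff.mpr hx.2
    positivity
  hardyOp_pos x hx := by
    have hdisc : 0 ≤ ((N : ℝ) - 2) ^ 2 / 4 + μ := by rw [mu0] at hμ; linarith
    refine hardyOp_norm_rpow_add_pos ?_ ?_ hx <;> simp only [finrank_euclideanSpace_fin]
    · rw [tauM]
      linear_combination Real.sq_sqrt hdisc
    · rw [mu0] at hμ
      linarith
  isBigO_phiMu := by
    refine Asymptotics.IsBigO.of_bound 1 (Eventually.of_forall fun x => ?_)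
    have h₁ := Real.rpow_nonneg (norm_nonneg x) (tauM N μ)
    have h₂ := Real.rpow_nonneg (norm_nonneg x) (-((N : ℝ) - 2) / 2)
    simp only [PhiMu, if_neg hμ.ne', Real.norm_eq_abs, abs_of_nonneg h₁,
      abs_of_nonneg (add_nonneg h₁ h₂)]
    linarith

-- `|x|^β` and `|x|^β log |x|` are `ℒ_{μ₀}`-harmonic and `ℒ_{μ₀} (-|x|^(β+2)) = 4 |x|^β`;
-- the constant `log R + R²` makes the barrier positive on `B_R`.
lemma isHardyBarrier_mu0 {N : ℕ} {R : ℝ} (hR : 1 < R) :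
    IsHardyBarrier N (mu0 N) R fun y =>
      (Real.log R + R ^ 2) * ‖y‖ ^ (-((N : ℝ) - 2) / 2)
        - ‖y‖ ^ (-((N : ℝ) - 2) / 2) * Real.log ‖y‖ - ‖y‖ ^ (-((N : ℝ) - 2) / 2 + 2) := by
  set β := -((N : ℝ) - 2) / 2 with hβ
  set c := Real.log R + R ^ 2
  have hc : 1 < c := by nlinarith [Real.log_pos hR]
  have hfactor : ∀ x : EucN N, x ≠ 0 →
      c * ‖x‖ ^ β - ‖x‖ ^ β * Real.log ‖x‖ - ‖x‖ ^ (β + 2)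
        = ‖x‖ ^ β * (c - Real.log ‖x‖ - ‖x‖ ^ 2) := fun x hx => by
    rw [Real.rpow_add (norm_pos_iff.mpr hx), Real.rpow_two]
    ring
  refine ⟨fun x hx => ?_, fun x hx => ?_, fun x hx => ?_, ?_⟩
  · exact ((contDiffAt_const.mul (contDiffAt_norm_rpow hx β)).sub
      (contDiffAt_norm_rpow_mul_log hx β)).sub (contDiffAt_norm_rpow hx _)
  · have hx₀ := norm_pos_iff.mpr hx.2
    have hxR : ‖x‖ < R := mem_ball_zero_iff.mp hx.1
    have := Real.log_lt_log hx₀ hxR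
    have : ‖x‖ ^ 2 < R ^ 2 := by gcongr
    rw [hfactor x hx.2]
    exact mul_pos (Real.rpow_pos_of_pos hx₀ _) (by linarith)
  · rw [hardyOp_critical_supersolution c (by simp [β]; ring) (by simp [β, mu0]; ring) hx]
    have := norm_pos_iff.mpr hx
    positivity
  · refine Asymptotics.IsBigO.of_bound 1 ?_
    filter_upwards [self_mem_nhdsWithin, nhdsWithin_le_nhds (ball_mem_nhds 0 one_pos)]
      with x hx₀ hx₁
    have hΦ := phiMu_pos (μ := mu0 N) hx₀ (mem_ball_zero_iff.mp hx₁)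
    have hsq : ‖x‖ ^ 2 < 1 := by nlinarith [mem_ball_zero_iff.mp hx₁, norm_nonneg x]
    have hP := Real.rpow_pos_of_pos (norm_pos_iff.mpr hx₀) β
    simp only [PhiMu, ite_true, one_div, Real.log_inv, ← hβ] at hΦ ⊢
    rw [hfactor x hx₀, Real.norm_eq_abs, Real.norm_eq_abs, abs_of_pos hΦ, abs_of_pos (by nlinarith)]
    nlinarith

lemma exists_isHardyBarrier {N : ℕ} {μ : ℝ} (hμ : mu0 N ≤ μ) {R : ℝ} (hR : 1 < R) :
    ∃ W, IsHardyBarrier N μ R W := by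
  rcases hμ.lt_or_eq with hμ | rfl
  · exact ⟨_, isHardyBarrier_of_mu0_lt hμ R⟩
  · exact ⟨_, isHardyBarrier_mu0 hR⟩

theorem stmt7_general (N : ℕ) (μ : ℝ) (hμ : mu0 N ≤ μ)
    (Ω : Set (EucN N)) (hΩo : IsOpen Ω) (hΩb : Bornology.IsBounded Ω)
    (h : EucN N → ℝ → ℝ)
    (hmono : ∀ x ∈ Ω, Monotone (h x))
    (hzero : ∀ x ∈ Ω, h x 0 = 0)
    (u : EucN N → ℝ)
    (hu2 : ContDiffOn ℝ 2 u (Ω \ {0}))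
    (huc : ContinuousOn u (closure Ω \ {0}))
    (heq : ∀ x ∈ Ω \ {0},
      -lapl u x + μ * ‖x‖ ^ (-2 : ℝ) * u x + h x (u x) = 0)
    (hbd : ∀ x ∈ frontier Ω, u x = 0)
    (hlim : Tendsto (fun x => u x / PhiMu N μ x) (𝓝[≠] (0 : EucN N)) (𝓝 0)) :
    ∀ x ∈ Ω \ {0}, u x = 0 := by
  obtain ⟨R, hR, hΩR⟩ := hΩb.closure.subset_ball_lt 1 0
  obtain ⟨W, hW⟩ := exists_isHardyBarrier hμ hR
  simp only [lapl_eq_laplacian] at heq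
  exact eq_zero_of_isLittleO_strictSupersolution (V := fun x => μ * ‖x‖ ^ (-2 : ℝ)) hΩo hΩb
    hmono hzero hu2 huc heq hbd (fun x hx => (hW.contDiffAt x hx.2).contDiffWithinAt)
    (fun x hx => (hW.contDiffAt x hx.2).continuousAt.continuousWithinAt)
    (fun x hx => hW.pos x ⟨hΩR hx.1, hx.2⟩) (fun x hx => hW.hardyOp_pos x hx.2)
    ((isLittleO_phiMu_of_tendsto hlim).trans_isBigO hW.isBigO_phiMu)

/-- a solution of `ℒ_μ u + h(x,u) = 0` in `Ω \ {0}` vanishing on `∂Ω`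
and `o(Φ_μ)` at the origin is identically zero. -/
theorem stmt7 (N : ℕ) (hN : 2 ≤ N) (μ : ℝ) (hμ : mu0 N ≤ μ)
    (Ω : Set (EucN N)) (hΩo : IsOpen Ω) (hΩb : Bornology.IsBounded Ω)
    (hΩc : IsConnected Ω) (h0 : (0 : EucN N) ∈ Ω)
    (h : EucN N → ℝ → ℝ)
    (hc : ContinuousOn (fun q : EucN N × ℝ => h q.1 q.2) (Ω ×ˢ (univ : Set ℝ)))
    (hmono : ∀ x ∈ Ω, Monotone (h x))
    (hzero : ∀ x ∈ Ω, h x 0 = 0)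
    (u : EucN N → ℝ)
    (hu2 : ContDiffOn ℝ 2 u (Ω \ {0}))
    (huc : ContinuousOn u (closure Ω \ {0}))
    (heq : ∀ x ∈ Ω \ {0},
      -lapl u x + μ * ‖x‖ ^ (-2 : ℝ) * u x + h x (u x) = 0)
    (hbd : ∀ x ∈ frontier Ω, u x = 0)
    (hlim : Tendsto (fun x => u x / PhiMu N μ x) (𝓝[≠] (0 : EucN N)) (𝓝 0)) :
    ∀ x ∈ Ω \ {0}, u x = 0 :=
  stmt7_general N μ hμ Ω hΩo hΩb h hmono hzero u hu2 huc heq hbd hlim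
end
end

section
/- Let N ≥ 3 and let g : [0,∞) → [0,∞) be a continuous nondecreasing function. For b > 0 set I(b) = ∫₁^∞ g(b t^{(N−2)/(N+2)} ln t) t^{−2} dt. Then for every b > 0, I(b) < ∞ if and only if ∫_e^∞ g(τ) (ln τ)^{(N+2)/(N−2)} τ^{−2N/(N−2)} dτ < ∞. In particular, the finiteness of I(b) is independent of the value of b > 0. -/
/-!
With `α = (N-2)/(N+2)` substitute `τ = b t^α log t`. The Jacobian weight
`|dτ/dt| (log τ)^{1/α} τ^{-1-1/α}` is comparable to `t⁻²` for large `t`, since their ratio tends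
to `b^{-1/α} α^{1+1/α} > 0`; hence the two tails are finite together. The remaining pieces over
bounded intervals are finite because `g` is monotone, hence bounded there.
-/

open MeasureTheory Metric Real Set Filter
open scoped ENNReal NNReal Topology

noncomputable section

theorem setLIntegral_Ioi_lt_top_iff_of_bdd {μ : Measure ℝ} [IsLocallyFiniteMeasure μ]
    {f : ℝ → ℝ≥0∞} {a T : ℝ} (haT : a ≤ T) (hbdd : ∃ y : ℝ≥0, ∀ x ∈ Ioc a T, f x ≤ y) :
    (∫⁻ x in Ioi a, f x ∂μ < ∞ ↔ ∫⁻ x in Ioi T, f x ∂μ < ∞) := by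
  refine ⟨fun h ↦ (lintegral_mono_set (Ioi_subset_Ioi haT)).trans_lt h, fun h ↦ ?_⟩
  rw [← Ioc_union_Ioi_eq_Ioi haT]
  exact (lintegral_union_le _ _ _).trans_lt <| ENNReal.add_lt_top.2
    ⟨setLIntegral_lt_top_of_le_nnreal measure_Ioc_lt_top.ne hbdd, h⟩

theorem setLIntegral_ofReal_lt_top_of_le_const_mul {X : Type*} [MeasurableSpace X]
    {μ : Measure X} {s : Set X} (hs : MeasurableSet s) {f h : X → ℝ} {c : ℝ} (hc : 0 ≤ c)
    (hle : ∀ x ∈ s, h x ≤ c * f x) (hf : ∫⁻ x in s, ENNReal.ofReal (f x) ∂μ < ∞) :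
    ∫⁻ x in s, ENNReal.ofReal (h x) ∂μ < ∞ :=
  calc ∫⁻ x in s, ENNReal.ofReal (h x) ∂μ
      ≤ ∫⁻ x in s, ENNReal.ofReal c * ENNReal.ofReal (f x) ∂μ := by
        refine setLIntegral_mono' hs fun x hx ↦ ?_
        rw [← ENNReal.ofReal_mul hc]
        exact ENNReal.ofReal_le_ofReal (hle x hx)
    _ = ENNReal.ofReal c * ∫⁻ x in s, ENNReal.ofReal (f x) ∂μ :=
        lintegral_const_mul' _ _ ENNReal.ofReal_ne_top
    _ < ∞ := ENNReal.mul_lt_top ENNReal.ofReal_lt_top hf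

theorem exists_ofReal_comp_mul_le {g u w : ℝ → ℝ} {s : Set ℝ} {U W : ℝ}
    (hgm : MonotoneOn g (Ici 0)) (hg0 : ∀ x, 0 ≤ x → 0 ≤ g x)
    (hu : ∀ x ∈ s, 0 ≤ u x ∧ u x ≤ U) (hw : ∀ x ∈ s, 0 ≤ w x ∧ w x ≤ W) :
    ∃ y : ℝ≥0, ∀ x ∈ s, ENNReal.ofReal (g (u x) * w x) ≤ y := by
  refine ⟨(g U * W).toNNReal, fun x hx ↦ ENNReal.ofReal_le_ofReal ?_⟩
  obtain ⟨hu0, huU⟩ := hu x hx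
  obtain ⟨hw0, hwW⟩ := hw x hx
  have hU : 0 ≤ U := hu0.trans huU
  exact mul_le_mul (hgm hu0 hU huU) hwW hw0 (hg0 U hU)

theorem eventually_le_mul_and_le_mul_of_tendsto_div {ι : Type*} {l : Filter ι} {f v : ι → ℝ}
    {C : ℝ} (hC : 0 < C) (hv : ∀ᶠ x in l, 0 < v x) (h : Tendsto (fun x ↦ f x / v x) l (𝓝 C)) :
    ∀ᶠ x in l, v x ≤ 2 / C * f x ∧ f x ≤ 2 * C * v x := by
  filter_upwards [hv, (tendsto_order.1 h).1 (C / 2) (by linarith),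
    (tendsto_order.1 h).2 (2 * C) (by linarith)] with x hvx hlo hhi
  rw [lt_div_iff₀ hvx] at hlo
  rw [div_lt_iff₀ hvx] at hhi
  constructor
  · rw [div_mul_eq_mul_div, le_div_iff₀ hC]
    linarith
  · linarith

theorem setLIntegral_Ioi_comp_lt_top_iff_of_le_mul {φ φ' G v w : ℝ → ℝ} {T c₁ c₂ : ℝ}
    (hc₁ : 0 ≤ c₁) (hc₂ : 0 ≤ c₂) (hφ_cont : ContinuousOn φ (Ici T))
    (hφ_mono : StrictMonoOn φ (Ici T)) (hφ_top : Tendsto φ atTop atTop)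
    (hφ' : ∀ t ∈ Ioi T, HasDerivAt φ (φ' t) t) (hG : ∀ t ∈ Ioi T, 0 ≤ G (φ t))
    (hv : ∀ t ∈ Ioi T, v t ≤ c₁ * (|φ' t| * w (φ t)))
    (hw : ∀ t ∈ Ioi T, |φ' t| * w (φ t) ≤ c₂ * v t) :
    (∫⁻ t in Ioi T, ENNReal.ofReal (G (φ t) * v t) < ∞) ↔
      ∫⁻ τ in Ioi (φ T), ENNReal.ofReal (G τ * w τ) < ∞ := by
  rw [← hφ_cont.image_Ioi_of_strictMonoOn hφ_mono hφ_top,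
    lintegral_image_eq_lintegral_abs_deriv_mul measurableSet_Ioi
      (fun t ht ↦ (hφ' t ht).hasDerivWithinAt) (hφ_mono.injOn.mono Ioi_subset_Ici_self)]
  simp_rw [← ENNReal.ofReal_mul (abs_nonneg _)]
  refine ⟨setLIntegral_ofReal_lt_top_of_le_const_mul measurableSet_Ioi hc₂ fun t ht ↦ ?_,
    setLIntegral_ofReal_lt_top_of_le_const_mul measurableSet_Ioi hc₁ fun t ht ↦ ?_⟩
  · calc |φ' t| * (G (φ t) * w (φ t)) = G (φ t) * (|φ' t| * w (φ t)) := by ring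
      _ ≤ G (φ t) * (c₂ * v t) := mul_le_mul_of_nonneg_left (hw t ht) (hG t ht)
      _ = c₂ * (G (φ t) * v t) := by ring
  · calc G (φ t) * v t ≤ G (φ t) * (c₁ * (|φ' t| * w (φ t))) :=
          mul_le_mul_of_nonneg_left (hv t ht) (hG t ht)
      _ = c₁ * (|φ' t| * (G (φ t) * w (φ t))) := by ring

section PowLog

variable {b α : ℝ}

theorem strictMonoOn_mul_rpow_mul_log (hb : 0 < b) (hα : 0 < α) :
    StrictMonoOn (fun t ↦ b * t ^ α * log t) (Ici 1) := by
  intro x (hx : 1 ≤ x) y (hy : 1 ≤ y) hxy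
  have hx0 : 0 < x := by linarith
  calc b * x ^ α * log x ≤ b * x ^ α * log y := by
        gcongr
    _ < b * y ^ α * log y := by
        gcongr
        exact log_pos (hx.trans_lt hxy)

theorem hasDerivAt_mul_rpow_mul_log {t : ℝ} (ht : 0 < t) :
    HasDerivAt (fun t ↦ b * t ^ α * log t) (b * t ^ (α - 1) * (α * log t + 1)) t := by
  refine (((hasDerivAt_rpow_const (p := α) (Or.inl ht.ne')).const_mul b).mul
    (hasDerivAt_log ht.ne')).congr_deriv ?_
  rw [rpow_sub_one ht.ne']
  field_simp

theorem tendsto_mul_rpow_mul_log_atTop (hb : 0 < b) (hα : 0 < α) :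
    Tendsto (fun t ↦ b * t ^ α * log t) atTop atTop :=
  ((tendsto_rpow_atTop hα).const_mul_atTop hb).atTop_mul_atTop₀ tendsto_log_atTop

/-- The Jacobian weight of the substitution `τ = b t^α log t`, divided by `t⁻²`, in a form
whose limit is visible. -/
theorem jacobian_div_rpow_neg_two_eq (hb : 0 < b) (hα : 0 < α) {t : ℝ} (ht : 1 < t)
    (hL : 0 ≤ log (b * t ^ α * log t)) :
    |b * t ^ (α - 1) * (α * log t + 1)| * log (b * t ^ α * log t) ^ α⁻¹ *
        (b * t ^ α * log t) ^ (-(1 + α⁻¹)) / t ^ (-2 : ℝ) =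
      b ^ (-α⁻¹) * ((α * log t + 1) / log t) * (log (b * t ^ α * log t) / log t) ^ α⁻¹ := by
  have ht0 : 0 < t := by linarith
  have hℓ : 0 < log t := log_pos ht
  set ℓ := log t
  set L := log (b * t ^ α * ℓ)
  have htα : 0 < t ^ α := rpow_pos_of_pos ht0 α
  have hexp : α * -(1 + α⁻¹) = -(α + 1) := by field_simp
  rw [abs_of_pos (by positivity), div_rpow hL hℓ.le, mul_rpow (by positivity) hℓ.le,
    mul_rpow hb.le htα.le, ← rpow_mul ht0.le, hexp, rpow_neg hb.le, rpow_neg hb.le,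
    rpow_neg ht0.le, rpow_neg hℓ.le, rpow_neg ht0.le, rpow_add hb, rpow_add hℓ,
    rpow_sub_one ht0.ne', rpow_add_one ht0.ne', rpow_two, rpow_one, rpow_one]
  field_simp

theorem tendsto_jacobian_div_rpow_neg_two (hb : 0 < b) (hα : 0 < α) :
    Tendsto (fun t ↦ |b * t ^ (α - 1) * (α * log t + 1)| * log (b * t ^ α * log t) ^ α⁻¹ *
        (b * t ^ α * log t) ^ (-(1 + α⁻¹)) / t ^ (-2 : ℝ)) atTop
      (𝓝 (b ^ (-α⁻¹) * α * α ^ α⁻¹)) := by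
  have hfirst : Tendsto (fun x : ℝ ↦ (α * x + 1) / x) atTop (𝓝 α) := by
    have : Tendsto (fun x : ℝ ↦ α + x⁻¹) atTop (𝓝 α) := by
      simpa using tendsto_inv_atTop_zero.const_add α
    refine this.congr' ?_
    filter_upwards [eventually_gt_atTop 0] with x hx
    field_simp
  have hsecond : Tendsto (fun x : ℝ ↦ (log b + α * x + log x) / x) atTop (𝓝 α) := by
    have : Tendsto (fun x : ℝ ↦ α + (log b * x⁻¹ + log x / x)) atTop (𝓝 α) := by
      simpa using (((tendsto_inv_atTop_zero.const_mul (log b)).add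
        isLittleO_log_id_atTop.tendsto_div_nhds_zero).const_add α)
    refine this.congr' ?_
    filter_upwards [eventually_gt_atTop 0] with x hx
    field_simp
    ring
  have hlog : ∀ᶠ t in atTop, (log b + α * log t + log (log t)) / log t =
      log (b * t ^ α * log t) / log t := by
    filter_upwards [eventually_gt_atTop 1] with t ht
    have ht0 : 0 < t := by linarith
    rw [log_mul (by positivity) (log_pos ht).ne', log_mul hb.ne' (by positivity), log_rpow ht0]
  have hlim := ((hfirst.comp tendsto_log_atTop).const_mul (b ^ (-α⁻¹))).mul
    (((hsecond.comp tendsto_log_atTop).congr' hlog).rpow_const (Or.inr (inv_pos.2 hα).le))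
  refine hlim.congr' ?_
  filter_upwards [eventually_gt_atTop 1,
    (tendsto_mul_rpow_mul_log_atTop hb hα).eventually_ge_atTop 1] with t ht hφ
  exact (jacobian_div_rpow_neg_two_eq hb hα ht (log_nonneg hφ)).symm

end PowLog

theorem setLIntegral_comp_mul_rpow_mul_log_lt_top_iff {g : ℝ → ℝ} (hgm : MonotoneOn g (Ici 0))
    (hg0 : ∀ s, 0 ≤ s → 0 ≤ g s) {b α : ℝ} (hb : 0 < b) (hα : 0 < α) :
    (∫⁻ t in Ioi 1, ENNReal.ofReal (g (b * t ^ α * log t) * t ^ (-2 : ℝ)) < ∞) ↔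
      ∫⁻ τ in Ioi (exp 1), ENNReal.ofReal (g τ * log τ ^ α⁻¹ * τ ^ (-(1 + α⁻¹))) < ∞ := by
  set φ : ℝ → ℝ := fun t ↦ b * t ^ α * log t
  set C := b ^ (-α⁻¹) * α * α ^ α⁻¹
  have hC : 0 < C := by positivity
  have hφ_mono := strictMonoOn_mul_rpow_mul_log hb hα
  have hφ_top := tendsto_mul_rpow_mul_log_atTop hb hα
  have hφ_nonneg : ∀ t, 1 ≤ t → 0 ≤ φ t := fun t ht ↦ by
    have := rpow_nonneg (zero_le_one.trans ht) α
    have := log_nonneg ht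
    positivity
  obtain ⟨T, hT⟩ := eventually_atTop.1 <|
    (eventually_le_mul_and_le_mul_of_tendsto_div hC
      (eventually_gt_atTop 0 |>.mono fun t ht ↦ rpow_pos_of_pos ht (-2))
      (tendsto_jacobian_div_rpow_neg_two hb hα)).and <|
    (eventually_ge_atTop 1).and (hφ_top.eventually_ge_atTop (exp 1))
  obtain ⟨-, hT1, hφT⟩ := hT T le_rfl
  have hbdd₁ : ∃ y : ℝ≥0, ∀ t ∈ Ioc 1 T, ENNReal.ofReal (g (φ t) * t ^ (-2 : ℝ)) ≤ y :=
    exists_ofReal_comp_mul_le hgm hg0 (U := φ T) (W := 1)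
      (fun t ⟨ht1, htT⟩ ↦ ⟨hφ_nonneg t ht1.le,
        hφ_mono.monotoneOn (mem_Ici.2 ht1.le) (mem_Ici.2 hT1) htT⟩)
      (fun t ⟨ht1, _⟩ ↦ ⟨by positivity, rpow_le_one_of_one_le_of_nonpos ht1.le (by norm_num)⟩)
  have hbdd₂ : ∃ y : ℝ≥0, ∀ τ ∈ Ioc (exp 1) (φ T),
      ENNReal.ofReal (g τ * (log τ ^ α⁻¹ * τ ^ (-(1 + α⁻¹)))) ≤ y := by
    refine exists_ofReal_comp_mul_le hgm hg0 (u := id) (U := φ T) (W := log (φ T) ^ α⁻¹)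
      (fun τ ⟨hτe, hτT⟩ ↦ ⟨(exp_pos 1).le.trans hτe.le, hτT⟩) (fun τ ⟨hτe, hτT⟩ ↦ ?_)
    have hτ1 : 1 ≤ τ := (one_le_exp zero_le_one).trans hτe.le
    have hlogτ := log_nonneg hτ1
    exact ⟨mul_nonneg (rpow_nonneg hlogτ _) (by positivity),
      (mul_le_of_le_one_right (rpow_nonneg hlogτ _)
        (rpow_le_one_of_one_le_of_nonpos hτ1 (neg_nonpos.2 (by positivity)))).trans
        (rpow_le_rpow hlogτ (log_le_log (by linarith) hτT) (by positivity))⟩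
  simp only [mul_assoc (g _)]
  rw [setLIntegral_Ioi_lt_top_iff_of_bdd hT1 hbdd₁, setLIntegral_Ioi_lt_top_iff_of_bdd hφT hbdd₂]
  refine setLIntegral_Ioi_comp_lt_top_iff_of_le_mul (G := g) (v := fun t ↦ t ^ (-2 : ℝ))
    (w := fun τ ↦ log τ ^ α⁻¹ * τ ^ (-(1 + α⁻¹))) (by positivity : 0 ≤ 2 / C)
    (by positivity : 0 ≤ 2 * C) (fun t ht ↦ ?_) (hφ_mono.mono (Ici_subset_Ici.2 hT1)) hφ_top
    (fun t ht ↦ hasDerivAt_mul_rpow_mul_log (by linarith [mem_Ioi.1 ht]))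
    (fun t ht ↦ hg0 _ (hφ_nonneg t (hT1.trans ht.le))) (fun t ht ↦ ?_) (fun t ht ↦ ?_)
  · exact (hasDerivAt_mul_rpow_mul_log (zero_lt_one.trans_le (hT1.trans ht))).continuousAt
      |>.continuousWithinAt
  · exact (hT t ht.le).1.1.trans_eq (congrArg _ (mul_assoc _ _ _))
  · exact (mul_assoc _ _ _).symm.trans_le (hT t ht.le).1.2

theorem stmt12_general (N : ℕ) (hN : 3 ≤ N) (g : ℝ → ℝ)
    (hgm : MonotoneOn g (Ici 0))
    (hg0 : ∀ s : ℝ, 0 ≤ s → 0 ≤ g s) :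
    ∀ b : ℝ, 0 < b →
      ((∫⁻ t in Ioi (1 : ℝ),
          ENNReal.ofReal (g (b * t ^ (((N : ℝ) - 2) / ((N : ℝ) + 2)) * Real.log t) *
            t ^ (-2 : ℝ)) ∂volume < ⊤) ↔
       (∫⁻ τ in Ioi (Real.exp 1),
          ENNReal.ofReal (g τ * (Real.log τ) ^ (((N : ℝ) + 2) / ((N : ℝ) - 2)) *
            τ ^ (-(2 * (N : ℝ)) / ((N : ℝ) - 2))) ∂volume < ⊤)) := by
  intro b hb
  have hN' : (3 : ℝ) ≤ N := by exact_mod_cast hN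
  have hβ : ((N : ℝ) + 2) / ((N : ℝ) - 2) = (((N : ℝ) - 2) / ((N : ℝ) + 2))⁻¹ :=
    (inv_div _ _).symm
  have hγ : -(2 * (N : ℝ)) / ((N : ℝ) - 2) = -(1 + (((N : ℝ) - 2) / ((N : ℝ) + 2))⁻¹) := by
    rw [inv_div]
    field_simp [show (N : ℝ) - 2 ≠ 0 by linarith]
    ring
  rw [hβ, hγ]
  exact setLIntegral_comp_mul_rpow_mul_log_lt_top_iff hgm hg0 hb
    (div_pos (by linarith) (by linarith))

/-- for continuous nondecreasing `g : [0,∞) → [0,∞)`, the finiteness of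
`I(b) = ∫₁^∞ g(b t^{(N-2)/(N+2)} ln t) t^{-2} dt` is equivalent, for every `b > 0`, to
`∫_e^∞ g(τ) (ln τ)^{(N+2)/(N-2)} τ^{-2N/(N-2)} dτ < ∞`; in particular it is
independent of `b > 0`. -/
theorem stmt12 (N : ℕ) (hN : 3 ≤ N) (g : ℝ → ℝ)
    (hgc : ContinuousOn g (Ici 0)) (hgm : MonotoneOn g (Ici 0))
    (hg0 : ∀ s : ℝ, 0 ≤ s → 0 ≤ g s) :
    ∀ b : ℝ, 0 < b →
      ((∫⁻ t in Ioi (1 : ℝ),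
          ENNReal.ofReal (g (b * t ^ (((N : ℝ) - 2) / ((N : ℝ) + 2)) * Real.log t) *
            t ^ (-2 : ℝ)) ∂volume < ⊤) ↔
       (∫⁻ τ in Ioi (Real.exp 1),
          ENNReal.ofReal (g τ * (Real.log τ) ^ (((N : ℝ) + 2) / ((N : ℝ) - 2)) *
            τ ^ (-(2 * (N : ℝ)) / ((N : ℝ) - 2))) ∂volume < ⊤)) :=
  stmt12_general N hN g hgm hg0
end
end

section
/- Let N ≥ 2 and μ > μ₀ = −(N−2)²/4, so that τ₋ = −(N−2)/2 − √((N−2)²/4+μ) < 0, and let g : [0,∞) → [0,∞) be a nondecreasing measurable function. Then for every a > 0, ∫_{B₁} g(a|x|^{τ₋}) |x|^{τ₊} dx < ∞ if and only if ∫₁^∞ g(t) t^{−1−p*_μ} dt < ∞, where B₁ is the open unit ball of ℝ^N, τ₊ = −(N−2)/2 + √((N−2)²/4+μ) and p*_μ = 1 − 2/τ₋. -/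
open MeasureTheory Metric Real Set Filter
open scoped ENNReal NNReal Topology

noncomputable section

/-! In polar coordinates the integral over `B₁` becomes `∫₀¹ g(a r^τ₋) r^(τ₊+N-1) dr`, and the
substitution `t = a r^τ₋`, which maps `(0, 1)` onto `(a, ∞)`, turns it into a constant multiple of
`∫ₐ^∞ g(t) t^(-1-p*_μ) dt`; the exponents match because `τ₊ + τ₋ = 2 - N`. Since `g` is monotone,
the integrand is bounded between `a` and `1`, so the lower limit `a` may be replaced by `1`. All
integrands are nonnegative, so finiteness of each integral is integrability. -/
lemma setLIntegral_ofReal_lt_top_iff_integrableOn {α : Type*} [MeasurableSpace α]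
    {μ : Measure α} {f : α → ℝ} {s : Set α} (hs : MeasurableSet s)
    (hfm : AEStronglyMeasurable f (μ.restrict s)) (hf : ∀ x ∈ s, 0 ≤ f x) :
    ∫⁻ x in s, ENNReal.ofReal (f x) ∂μ < ∞ ↔ IntegrableOn f s μ := by
  rw [lt_top_iff_ne_top]
  exact lintegral_ofReal_ne_top_iff_integrable hfm (ae_restrict_of_forall_mem hs hf)

lemma integrableOn_Ioi_iff_of_integrableOn_Ioc {E : Type*} [NormedAddCommGroup E]
    {f : ℝ → E} {b c : ℝ} (hbc : b ≤ c) (hf : IntegrableOn f (Ioc b c)) :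
    IntegrableOn f (Ioi b) ↔ IntegrableOn f (Ioi c) := by
  rw [← Ioc_union_Ioi_eq_Ioi hbc, integrableOn_union]
  exact and_iff_right hf

lemma MonotoneOn.integrableOn_Ioi_mul_rpow_iff {g : ℝ → ℝ} (hg : MonotoneOn g (Ici 0))
    (e : ℝ) {b c : ℝ} (hb : 0 < b) (hc : 0 < c) :
    IntegrableOn (fun t => g t * t ^ e) (Ioi b) ↔ IntegrableOn (fun t => g t * t ^ e) (Ioi c) := by
  wlog hbc : b ≤ c generalizing b c
  · exact (this hc hb (le_of_not_ge hbc)).symm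
  have hIcc : Icc b c ⊆ Ioi 0 := fun t ht => hb.trans_le ht.1
  refine integrableOn_Ioi_iff_of_integrableOn_Ioc hbc
    ((IntegrableOn.mul_continuousOn ?_ ?_ isCompact_Icc).mono_set Ioc_subset_Icc_self)
  · exact (hg.mono fun t ht => mem_Ici.2 (hIcc ht).le).integrableOn_isCompact isCompact_Icc
  · exact fun t ht => (continuousAt_rpow_const _ _ (Or.inl (hIcc ht).ne')).continuousWithinAt

lemma image_const_mul_rpow_Ioo_zero_one {a τ : ℝ} (ha : 0 < a) (hτ : τ < 0) :
    (fun r => a * r ^ τ) '' Ioo 0 1 = Ioi a := by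
  have hpow : (fun r : ℝ => r ^ τ) '' Ioo 0 1 = Ioi 1 := by
    ext t
    constructor
    · rintro ⟨r, hr, rfl⟩
      exact (one_lt_rpow_iff_of_pos hr.1).2 (Or.inr ⟨hr.2, hτ⟩)
    · intro ht
      refine ⟨t ^ τ⁻¹, ⟨rpow_pos_of_pos (one_pos.trans ht) _,
        rpow_lt_one_of_one_lt_of_neg ht (inv_lt_zero.2 hτ)⟩, ?_⟩
      dsimp only
      rw [← rpow_mul (one_pos.trans ht).le, inv_mul_cancel₀ hτ.ne, rpow_one]
  rw [← image_image (a * ·) (· ^ τ), hpow, image_mul_left_Ioi ha, mul_one]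

lemma integrableOn_Ioi_iff_integrableOn_Ioo_rpow {E : Type*} [NormedAddCommGroup E]
    [NormedSpace ℝ E] {a τ : ℝ} (ha : 0 < a) (hτ : τ < 0) (h : ℝ → E) :
    IntegrableOn h (Ioi a) ↔ IntegrableOn (fun r => r ^ (τ - 1) • h (a * r ^ τ)) (Ioo 0 1) := by
  have hderiv : ∀ r ∈ Ioo (0 : ℝ) 1,
      HasDerivWithinAt (fun r => a * r ^ τ) (a * (τ * r ^ (τ - 1))) (Ioo 0 1) r :=
    fun r hr => ((hasDerivAt_rpow_const (Or.inl hr.1.ne')).const_mul a).hasDerivWithinAt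
  have hinj : InjOn (fun r : ℝ => a * r ^ τ) (Ioo 0 1) := fun r hr s hs hrs =>
    rpow_left_injOn hτ.ne hr.1.le hs.1.le (mul_left_cancel₀ ha.ne' hrs)
  rw [← image_const_mul_rpow_Ioo_zero_one ha hτ,
    integrableOn_image_iff_integrableOn_abs_deriv_smul measurableSet_Ioo hderiv hinj]
  have hc : -(a * τ) ≠ 0 := neg_ne_zero.2 (mul_ne_zero ha.ne' hτ.ne)
  refine (integrableOn_congr_fun (fun r hr => ?_) measurableSet_Ioo).trans
    (integrable_smul_iff hc _)
  rw [Pi.smul_apply, smul_smul, ← mul_assoc, abs_of_neg]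
  · module
  · exact mul_neg_of_neg_of_pos (mul_neg_of_pos_of_neg ha hτ) (rpow_pos_of_pos hr.1 _)

lemma integrableOn_Ioi_mul_rpow_iff_integrableOn_Ioo {g : ℝ → ℝ} {a τ : ℝ} (ha : 0 < a)
    (hτ : τ < 0) (e : ℝ) :
    IntegrableOn (fun t => g t * t ^ e) (Ioi a) ↔
      IntegrableOn (fun r => g (a * r ^ τ) * r ^ (τ * (e + 1) - 1)) (Ioo 0 1) := by
  rw [integrableOn_Ioi_iff_integrableOn_Ioo_rpow ha hτ]
  refine (integrableOn_congr_fun (fun r hr => ?_) measurableSet_Ioo).trans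
    (integrable_smul_iff (rpow_pos_of_pos ha e).ne' _)
  have hr : 0 < r := hr.1
  rw [Pi.smul_apply, smul_eq_mul, smul_eq_mul, mul_rpow ha.le (rpow_nonneg hr.le _),
    ← rpow_mul hr.le, show τ * (e + 1) - 1 = (τ - 1) + τ * e by ring, rpow_add hr]
  ring

lemma integrableOn_ball_mul_norm_rpow_iff {N : ℕ} (hN : 1 ≤ N) (F : ℝ → ℝ) (p R : ℝ) :
    IntegrableOn (fun x : EucN N => F ‖x‖ * ‖x‖ ^ p) (ball 0 R) ↔
      IntegrableOn (fun r => F r * r ^ (p + N - 1)) (Ioo 0 R) := by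
  have : NeZero N := ⟨by omega⟩
  rw [integrableOn_fun_norm_addHaar volume (f := fun r => F r * r ^ p), finrank_euclideanSpace_fin]
  refine integrableOn_congr_fun (fun r hr => ?_) measurableSet_Ioo
  rw [smul_eq_mul, ← rpow_natCast, Nat.cast_sub hN, Nat.cast_one, add_sub_assoc, rpow_add hr.1]
  ring

lemma tauM_neg {N : ℕ} (hN : 2 ≤ N) {μ : ℝ} (hμ : mu0 N < μ) : tauM N μ < 0 := by
  have hN' : (2 : ℝ) ≤ N := by exact_mod_cast hN
  have hsqrt : 0 < √(((N : ℝ) - 2) ^ 2 / 4 + μ) := by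
    rw [mu0] at hμ
    exact sqrt_pos.2 (by linarith)
  rw [tauM]
  linarith

lemma tauM_mul_neg_pstar_sub_one {N : ℕ} {μ : ℝ} (hτ : tauM N μ ≠ 0) :
    tauM N μ * (-1 - pstar N μ + 1) - 1 = tauP N μ + N - 1 := by
  have hsum : tauP N μ = 2 - N - tauM N μ := by
    rw [tauP, tauM]
    ring
  rw [pstar, hsum]
  field_simp
  ring

/-- for `N ≥ 2`, `μ > μ₀` and nondecreasing measurable
`g : [0,∞) → [0,∞)`, for every `a > 0`,
`∫_{B₁} g(a|x|^{τ₋}) |x|^{τ₊} dx < ∞ ↔ ∫₁^∞ g(t) t^{-1-p*_μ} dt < ∞`. -/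
theorem stmt19 (N : ℕ) (hN : 2 ≤ N) (μ : ℝ) (hμ : mu0 N < μ)
    (g : ℝ → ℝ) (hgmeas : Measurable g) (hgm : MonotoneOn g (Ici 0))
    (hg0 : ∀ s : ℝ, 0 ≤ s → 0 ≤ g s) :
    ∀ a : ℝ, 0 < a →
      ((∫⁻ x in Metric.ball (0 : EucN N) 1,
          ENNReal.ofReal (g (a * ‖x‖ ^ tauM N μ) * ‖x‖ ^ tauP N μ) ∂volume < ⊤) ↔
       (∫⁻ t in Ioi (1 : ℝ),
          ENNReal.ofReal (g t * t ^ (-1 - pstar N μ)) ∂volume < ⊤)) := by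
  intro a ha
  have hτ := tauM_neg hN hμ
  have hball_nonneg : ∀ x ∈ ball (0 : EucN N) 1,
      0 ≤ g (a * ‖x‖ ^ tauM N μ) * ‖x‖ ^ tauP N μ := fun x _ =>
    mul_nonneg (hg0 _ (by positivity)) (by positivity)
  have htail_nonneg : ∀ t ∈ Ioi (1 : ℝ), 0 ≤ g t * t ^ (-1 - pstar N μ) := fun t ht =>
    mul_nonneg (hg0 t (zero_le_one.trans ht.le)) (rpow_nonneg (zero_le_one.trans ht.le) _)
  rw [setLIntegral_ofReal_lt_top_iff_integrableOn measurableSet_ball (by fun_prop) hball_nonneg,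
    setLIntegral_ofReal_lt_top_iff_integrableOn measurableSet_Ioi (by fun_prop) htail_nonneg,
    integrableOn_ball_mul_norm_rpow_iff (F := fun r => g (a * r ^ tauM N μ)) (by omega),
    ← hgm.integrableOn_Ioi_mul_rpow_iff _ ha one_pos,
    integrableOn_Ioi_mul_rpow_iff_integrableOn_Ioo ha hτ, tauM_mul_neg_pstar_sub_one hτ.ne]
end
end
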